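/- Let λ > 0, C ∈ ℝ^{m×n}, and let μ ∈ Σ_m and ν ∈ Σ_n have all entries strictly positive. If π* minimizes ⟨π, C⟩ − H(π)/λ over U(μ,ν), then every entry of π* is strictly positive, and there exist vectors a ∈ ℝ^m and b ∈ ℝ^n such that π*_{ij} = exp(λ(a_i + b_j − C_{ij})) for all i, j. -/

import Mathlib

/-!
Adding `t` times a cycle matrix `D = (eᵢ - eᵢ')(eⱼ - eⱼ')ᵀ` to a transport plan keeps it in
`U(μ, ν)` as long as the entries stay nonnegative. By convexity of `x ↦ x log x - x`, the objective
then grows by at most `t ∑ D ⊙ G`, where `G = C + log π / λ` is taken at the perturbed plan.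
If a minimizer had `πᵢⱼ = 0`, pick `πᵢⱼ' > 0` and `πᵢ'ⱼ > 0`: along that cycle `∑ D ⊙ G`
contains `log t / λ → -∞`, so a small move decreases the objective. Once `π > 0`, every cycle
direction is critical, so `G` has vanishing cycle sums `Gᵢⱼ - Gᵢⱼ' - Gᵢ'ⱼ + Gᵢ'ⱼ'`; hence
`G = aᵢ + bⱼ` and `π = exp (λ (G - C))`.
-/

/-- Membership in the transport polytope `U(μ, ν)`. -/
def inU {m n : ℕ} (μ : Fin m → ℝ) (ν : Fin n → ℝ) (π : Matrix (Fin m) (Fin n) ℝ) : Prop :=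
  (∀ i j, 0 ≤ π i j) ∧ (∀ i, ∑ j, π i j = μ i) ∧ (∀ j, ∑ i, π i j = ν j)

/-- The entropy-regularized optimal transport objective `⟨π, C⟩ - H(π)/λ`, where
`H(π) = -∑ᵢⱼ πᵢⱼ (log πᵢⱼ - 1)`. -/
noncomputable def rotObj {m n : ℕ} (C : Matrix (Fin m) (Fin n) ℝ) (lam : ℝ)
    (π : Matrix (Fin m) (Fin n) ℝ) : ℝ :=
  (∑ i, ∑ j, π i j * C i j) - (-∑ i, ∑ j, π i j * (Real.log (π i j) - 1)) / lam

open Filter Topology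

theorem mul_log_sub_self_sub_le {x y : ℝ} (hx : 0 ≤ x) (hy : 0 < y) :
    y * Real.log y - y - (x * Real.log x - x) ≤ (y - x) * Real.log y := by
  rcases hx.eq_or_lt with rfl | hx
  · simp only [zero_mul, sub_zero]
    linarith
  have h : x * Real.log (y / x) ≤ y - x := by
    have := mul_le_mul_of_nonneg_left (Real.log_le_sub_one_of_pos (div_pos hy hx)) hx.le
    rwa [mul_sub, mul_div_cancel₀ _ hx.ne', mul_one] at this
  rw [Real.log_div hy.ne' hx.ne'] at h
  linarith

theorem exists_add_of_add_eq_add {ι κ G : Type*} [AddCommGroup G] (M : ι → κ → G)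
    (h : ∀ i i' j j', M i j + M i' j' = M i j' + M i' j) :
    ∃ (a : ι → G) (b : κ → G), ∀ i j, M i j = a i + b j := by
  rcases isEmpty_or_nonempty ι with _ | ⟨⟨i₀⟩⟩
  · exact ⟨0, 0, fun i => isEmptyElim i⟩
  rcases isEmpty_or_nonempty κ with _ | ⟨⟨j₀⟩⟩
  · exact ⟨0, 0, fun _ j => isEmptyElim j⟩
  refine ⟨fun i => M i j₀ - M i₀ j₀, fun j => M i₀ j, fun i j => ?_⟩
  rw [sub_add_eq_add_sub, ← h i i₀ j j₀, add_sub_cancel_right]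

section Cycle

variable {ι κ : Type*} [DecidableEq ι] [DecidableEq κ]

noncomputable def cycleMatrix (i i' : ι) (j j' : κ) : Matrix ι κ ℝ :=
  Matrix.vecMulVec (Pi.single i 1 - Pi.single i' 1) (Pi.single j 1 - Pi.single j' 1)

theorem cycleMatrix_corners {i i' : ι} {j j' : κ} (hi : i ≠ i') (hj : j ≠ j') :
    cycleMatrix i i' j j' i j = 1 ∧ cycleMatrix i i' j j' i j' = -1 ∧
      cycleMatrix i i' j j' i' j = -1 ∧ cycleMatrix i i' j j' i' j' = 1 := by
  simp [cycleMatrix, Matrix.vecMulVec_apply, hi, hi.symm, hj, hj.symm]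

theorem cycleMatrix_support {i i' k : ι} {j j' l : κ} (h : cycleMatrix i i' j j' k l ≠ 0) :
    (k = i ∨ k = i') ∧ (l = j ∨ l = j') := by
  by_contra hkl
  apply h
  simp only [not_and_or, not_or] at hkl
  rcases hkl with ⟨hi, hi'⟩ | ⟨hj, hj'⟩ <;> simp [cycleMatrix, Matrix.vecMulVec_apply, *]

variable [Fintype ι] [Fintype κ]

theorem sum_cycleMatrix_mul (i i' : ι) (j j' : κ) (M : Matrix ι κ ℝ) :
    ∑ k, ∑ l, cycleMatrix i i' j j' k l * M k l = M i j - M i j' - M i' j + M i' j' := by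
  simp only [cycleMatrix, Matrix.vecMulVec_apply, Pi.sub_apply, Pi.single_apply, mul_sub, mul_ite,
    mul_one, mul_zero, sub_mul, ite_mul, one_mul, zero_mul, Finset.sum_sub_distrib,
    Finset.sum_ite_eq', Finset.mem_univ, ↓reduceIte]
  ring

theorem sum_cycleMatrix_row (i i' : ι) (j j' : κ) (k : ι) :
    ∑ l, cycleMatrix i i' j j' k l = 0 := by
  simpa using sum_cycleMatrix_mul i i' j j' (fun k' _ => if k' = k then 1 else 0)

theorem sum_cycleMatrix_col (i i' : ι) (j j' : κ) (l : κ) :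
    ∑ k, cycleMatrix i i' j j' k l = 0 := by
  simpa using sum_cycleMatrix_mul i i' j j' (fun _ l' => if l' = l then 1 else 0)

end Cycle

section Objective

variable {m n : ℕ}

noncomputable def rotObjGrad (C : Matrix (Fin m) (Fin n) ℝ) (lam : ℝ)
    (π : Matrix (Fin m) (Fin n) ℝ) : Matrix (Fin m) (Fin n) ℝ :=
  fun i j => C i j + Real.log (π i j) / lam

theorem inU_add_smul {μ : Fin m → ℝ} {ν : Fin n → ℝ} {π D : Matrix (Fin m) (Fin n) ℝ} {t : ℝ}
    (hπ : inU μ ν π) (hrow : ∀ i, ∑ j, D i j = 0) (hcol : ∀ j, ∑ i, D i j = 0)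
    (hnonneg : ∀ i j, 0 ≤ π i j + t * D i j) : inU μ ν (π + t • D) := by
  refine ⟨hnonneg, fun i => ?_, fun j => ?_⟩
  · simp [Finset.sum_add_distrib, ← Finset.mul_sum, hrow, hπ.2.1]
  · simp [Finset.sum_add_distrib, ← Finset.mul_sum, hcol, hπ.2.2]

theorem rotObj_eq_sum (C : Matrix (Fin m) (Fin n) ℝ) (lam : ℝ) (π : Matrix (Fin m) (Fin n) ℝ) :
    rotObj C lam π = ∑ i, ∑ j, (π i j * C i j + (π i j * Real.log (π i j) - π i j) / lam) := by
  simp only [rotObj, mul_sub_one, Finset.sum_add_distrib, Finset.sum_div, neg_div, sub_neg_eq_add]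

theorem rotObj_add_smul_sub_le (C : Matrix (Fin m) (Fin n) ℝ) {lam : ℝ} (hlam : 0 ≤ lam)
    {π D : Matrix (Fin m) (Fin n) ℝ} {t : ℝ} (hπ : ∀ i j, 0 ≤ π i j)
    (hpos : ∀ i j, D i j ≠ 0 → 0 < π i j + t * D i j) :
    rotObj C lam (π + t • D) - rotObj C lam π ≤
      t * ∑ i, ∑ j, D i j * rotObjGrad C lam (π + t • D) i j := by
  simp only [rotObj_eq_sum, ← Finset.sum_sub_distrib, Finset.mul_sum]
  refine Finset.sum_le_sum fun i _ => Finset.sum_le_sum fun j _ => ?_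
  simp only [rotObjGrad, Matrix.add_apply, Matrix.smul_apply, smul_eq_mul]
  rcases eq_or_ne (D i j) 0 with hD | hD
  · simp [hD]
  have key := div_le_div_of_nonneg_right (mul_log_sub_self_sub_le (hπ i j) (hpos i j hD)) hlam
  rw [sub_div] at key
  linear_combination key

theorem hasDerivAt_rotObj_add_smul (C : Matrix (Fin m) (Fin n) ℝ) (lam : ℝ)
    {π : Matrix (Fin m) (Fin n) ℝ} (hπ : ∀ i j, 0 < π i j) (D : Matrix (Fin m) (Fin n) ℝ) :
    HasDerivAt (fun t : ℝ => rotObj C lam (π + t • D))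
      (∑ i, ∑ j, D i j * rotObjGrad C lam π i j) 0 := by
  simp only [rotObj_eq_sum]
  refine HasDerivAt.fun_sum fun i _ => HasDerivAt.fun_sum fun j _ => ?_
  have hline : HasDerivAt (fun t : ℝ => (π + t • D) i j) (D i j) 0 := by
    simpa using ((hasDerivAt_id (0 : ℝ)).mul_const (D i j)).const_add (π i j)
  have hentry : HasDerivAt (fun x => x * C i j + (x * Real.log x - x) / lam)
      (rotObjGrad C lam π i j) (π i j) := by
    have h := (hasDerivAt_id' (π i j)).mul_const (C i j) |>.add
      (((Real.hasDerivAt_mul_log (hπ i j).ne').sub (hasDerivAt_id' _)).div_const lam)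
    exact h.congr_deriv (by simp only [rotObjGrad]; ring)
  exact (hentry.comp_of_eq 0 hline (by simp)).congr_deriv (mul_comm _ _)

end Objective

section Minimizer

variable {m n : ℕ} {lam : ℝ} {C : Matrix (Fin m) (Fin n) ℝ} {μ : Fin m → ℝ} {ν : Fin n → ℝ}
  {π : Matrix (Fin m) (Fin n) ℝ}

theorem isLocalMin_rotObj_add_smul (hπ : inU μ ν π)
    (hmin : IsMinOn (rotObj C lam) {π' | inU μ ν π'} π) (hpos : ∀ i j, 0 < π i j)
    {D : Matrix (Fin m) (Fin n) ℝ} (hrow : ∀ i, ∑ j, D i j = 0) (hcol : ∀ j, ∑ i, D i j = 0) :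
    IsLocalMin (fun t : ℝ => rotObj C lam (π + t • D)) 0 := by
  have hnear : ∀ᶠ t in 𝓝 (0 : ℝ), ∀ i j, 0 < π i j + t * D i j := by
    refine eventually_all.2 fun i => eventually_all.2 fun j => ?_
    have hcont : Continuous fun t : ℝ => π i j + t * D i j := by fun_prop
    exact (hcont.tendsto 0).eventually (lt_mem_nhds (by simpa using hpos i j))
  filter_upwards [hnear] with t ht
  simpa using isMinOn_iff.1 hmin _ (inU_add_smul hπ hrow hcol fun i j => (ht i j).le)

theorem rotObjGrad_add_eq_add_of_isMinOn (hπ : inU μ ν π)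
    (hmin : IsMinOn (rotObj C lam) {π' | inU μ ν π'} π) (hpos : ∀ i j, 0 < π i j)
    (i i' : Fin m) (j j' : Fin n) :
    rotObjGrad C lam π i j + rotObjGrad C lam π i' j' =
      rotObjGrad C lam π i j' + rotObjGrad C lam π i' j := by
  have hcrit := (isLocalMin_rotObj_add_smul hπ hmin hpos (sum_cycleMatrix_row i i' j j')
    (sum_cycleMatrix_col i i' j j')).hasDerivAt_eq_zero
    (hasDerivAt_rotObj_add_smul C lam hpos (cycleMatrix i i' j j'))
  rw [sum_cycleMatrix_mul] at hcrit
  linarith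

theorem eventually_pos_add_smul_cycleMatrix (hπ : ∀ k l, 0 ≤ π k l) {i i' : Fin m}
    {j j' : Fin n} (hi : i ≠ i') (hj : j ≠ j') (hj' : 0 < π i j') (hi' : 0 < π i' j) :
    ∀ᶠ t in 𝓝[>] (0 : ℝ), ∀ k l, cycleMatrix i i' j j' k l ≠ 0 →
      0 < π k l + t * cycleMatrix i i' j j' k l := by
  obtain ⟨h1, h2, h3, h4⟩ := cycleMatrix_corners hi hj
  have hij := hπ i j
  have hij' := hπ i' j'
  filter_upwards [Ioo_mem_nhdsGT (lt_min hj' hi')] with t ⟨ht0, ht⟩ k l hkl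
  rw [lt_min_iff] at ht
  rcases cycleMatrix_support hkl with ⟨rfl | rfl, rfl | rfl⟩ <;>
    simp only [h1, h2, h3, h4] <;> linarith

theorem tendsto_sum_cycleMatrix_mul_rotObjGrad_atBot (hlam : 0 < lam) (hπ : ∀ k l, 0 ≤ π k l)
    {i i' : Fin m} {j j' : Fin n} (hi : i ≠ i') (hj : j ≠ j') (h0 : π i j = 0)
    (hj' : 0 < π i j') (hi' : 0 < π i' j) :
    Tendsto (fun t : ℝ => ∑ k, ∑ l, cycleMatrix i i' j j' k l *
      rotObjGrad C lam (π + t • cycleMatrix i i' j j') k l) (𝓝[>] 0) atBot := by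
  obtain ⟨h1, h2, h3, h4⟩ := cycleMatrix_corners hi hj
  have hij' := hπ i' j'
  set K := Real.log (π i' j' + 1) - Real.log (π i j' / 2) - Real.log (π i' j / 2)
  have hbound : Tendsto (fun t => C i j - C i j' - C i' j + C i' j' + (Real.log t + K) / lam)
      (𝓝[>] 0) atBot :=
    tendsto_atBot_add_const_left _ _
      ((tendsto_atBot_add_const_right _ K Real.tendsto_log_nhdsGT_zero).atBot_div_const hlam)
  refine tendsto_atBot_mono' _ ?_ hbound
  filter_upwards [Ioo_mem_nhdsGT (show (0 : ℝ) < min 1 (min (π i j' / 2) (π i' j / 2)) by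
    positivity)] with t ⟨ht0, ht⟩
  simp only [lt_min_iff] at ht
  rw [sum_cycleMatrix_mul]
  simp only [rotObjGrad, Matrix.add_apply, Matrix.smul_apply, smul_eq_mul, h1, h2, h3, h4, h0,
    mul_one, mul_neg, zero_add, ← sub_eq_add_neg]
  have hlogs : Real.log t + Real.log (π i' j' + t) - Real.log (π i j' - t) - Real.log (π i' j - t)
      ≤ Real.log t + K := by
    have := Real.log_le_log (by linarith) (by linarith : π i' j' + t ≤ π i' j' + 1)
    have := Real.log_le_log (by linarith) (by linarith : π i j' / 2 ≤ π i j' - t)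
    have := Real.log_le_log (by linarith) (by linarith : π i' j / 2 ≤ π i' j - t)
    linarith
  have := div_le_div_of_nonneg_right hlogs hlam.le
  simp only [add_div, sub_div] at this ⊢
  linarith

theorem pos_of_isMinOn_rotObj (hlam : 0 < lam) (hμ : ∀ i, 0 < μ i) (hν : ∀ j, 0 < ν j)
    (hπ : inU μ ν π) (hmin : IsMinOn (rotObj C lam) {π' | inU μ ν π'} π) (i : Fin m) (j : Fin n) :
    0 < π i j := by
  refine (hπ.1 i j).lt_of_ne fun h0 => ?_
  obtain ⟨j', -, hj'⟩ := Finset.exists_lt_of_sum_lt (s := Finset.univ) (f := 0) (g := π i)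
    (by simpa [hπ.2.1 i] using hμ i)
  obtain ⟨i', -, hi'⟩ := Finset.exists_lt_of_sum_lt (s := Finset.univ) (f := 0)
    (g := fun k => π k j) (by simpa [hπ.2.2 j] using hν j)
  have hi : i ≠ i' := by rintro rfl; simp [← h0] at hi'
  have hj : j ≠ j' := by rintro rfl; simp [← h0] at hj'
  set D := cycleMatrix i i' j j'
  have hsteep := (tendsto_sum_cycleMatrix_mul_rotObjGrad_atBot (C := C) hlam hπ.1 hi hj h0.symm
    hj' hi').eventually (eventually_lt_atBot 0)
  obtain ⟨t, ht0, hsupp, hslope⟩ := (eventually_mem_nhdsWithin.and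
    ((eventually_pos_add_smul_cycleMatrix hπ.1 hi hj hj' hi').and hsteep)).exists
  have hfeas : inU μ ν (π + t • D) := inU_add_smul hπ (sum_cycleMatrix_row i i' j j')
    (sum_cycleMatrix_col i i' j j') fun k l => (eq_or_ne (D k l) 0).elim
      (fun h => by simp [h, hπ.1 k l]) fun h => (hsupp k l h).le
  have hdescent := rotObj_add_smul_sub_le C hlam.le hπ.1 hsupp
  linarith [isMinOn_iff.1 hmin _ hfeas, mul_neg_of_pos_of_neg (Set.mem_Ioi.1 ht0) hslope]

end Minimizer

theorem rot_minimizer_form_general (m n : ℕ) (lam : ℝ) (hlam : 0 < lam)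
    (C : Matrix (Fin m) (Fin n) ℝ)
    (μ : Fin m → ℝ) (ν : Fin n → ℝ)
    (hμ0 : ∀ i, 0 < μ i)
    (hν0 : ∀ j, 0 < ν j)
    (π : Matrix (Fin m) (Fin n) ℝ) (hπ : inU μ ν π)
    (hmin : ∀ π' : Matrix (Fin m) (Fin n) ℝ, inU μ ν π' →
        rotObj C lam π ≤ rotObj C lam π') :
    (∀ i j, 0 < π i j) ∧
    ∃ (a : Fin m → ℝ) (b : Fin n → ℝ),
      ∀ i j, π i j = Real.exp (lam * (a i + b j - C i j)) := by
  have hmin' : IsMinOn (rotObj C lam) {π' | inU μ ν π'} π := isMinOn_iff.2 hmin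
  have hpos := pos_of_isMinOn_rotObj hlam hμ0 hν0 hπ hmin'
  obtain ⟨a, b, hab⟩ := exists_add_of_add_eq_add _ (rotObjGrad_add_eq_add_of_isMinOn hπ hmin' hpos)
  refine ⟨hpos, a, b, fun i j => ?_⟩
  conv_lhs => rw [← Real.exp_log (hpos i j)]
  rw [← hab, rotObjGrad]
  congr 1
  field_simp
  ring

/-- If `μ` and `ν` have strictly positive entries and `π*` minimizes the entropy-regularized
optimal transport objective over `U(μ, ν)`, then all entries of `π*` are strictly positive
and `π*ᵢⱼ = exp(λ(aᵢ + bⱼ − Cᵢⱼ))` for some vectors `a, b`. -/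
theorem rot_minimizer_form (m n : ℕ) (lam : ℝ) (hlam : 0 < lam)
    (C : Matrix (Fin m) (Fin n) ℝ)
    (μ : Fin m → ℝ) (ν : Fin n → ℝ)
    (hμ0 : ∀ i, 0 < μ i) (hμ1 : ∑ i, μ i = 1)
    (hν0 : ∀ j, 0 < ν j) (hν1 : ∑ j, ν j = 1)
    (π : Matrix (Fin m) (Fin n) ℝ) (hπ : inU μ ν π)
    (hmin : ∀ π' : Matrix (Fin m) (Fin n) ℝ, inU μ ν π' →
        rotObj C lam π ≤ rotObj C lam π') :
    (∀ i j, 0 < π i j) ∧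
    ∃ (a : Fin m → ℝ) (b : Fin n → ℝ),
      ∀ i j, π i j = Real.exp (lam * (a i + b j - C i j)) :=
  rot_minimizer_form_general m n lam hlam C μ ν hμ0 hν0 π hπ hmin
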